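/- arXiv:1110.3939 — 2 statements merged into one kernel-verified Lean document; each statement's English description precedes it below -/
import Mathlib

section
/- A family ℱ of subsets of a finite set F is a clone structure (i.e., ℱ equals the family of all clone sets of some preference profile over F) if and only if ℱ satisfies axioms A1–A5. -/
variable {α : Type*}

/-- `r` is a strict linear order (complete, transitive, antisymmetric) on the set `C`. -/
def IsLinOn (C : Set α) (r : α → α → Prop) : Prop :=
  (∀ a ∈ C, ¬r a a) ∧
    (∀ a ∈ C, ∀ b ∈ C, ∀ c ∈ C, r a b → r b c → r a c) ∧
      ∀ a ∈ C, ∀ b ∈ C, a ≠ b → r a b ∨ r b a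

/-- A preference profile over `C`: a (nonempty) finite tuple of linear orders on `C`. -/
def IsProfile (C : Set α) {n : ℕ} (R : Fin n → α → α → Prop) : Prop :=
  0 < n ∧ ∀ i, IsLinOn C (R i)

/-- `X` is a clone set for the profile `R` over `C`. -/
def IsCloneSet (C : Set α) {n : ℕ} (R : Fin n → α → α → Prop) (X : Set α) : Prop :=
  X.Nonempty ∧ X ⊆ C ∧
    ∀ c ∈ X, ∀ c' ∈ X, ∀ a ∈ C \ X, ∀ i, (R i c a ↔ R i c' a)

/-- The clone structure of `R`: the family of all clone sets. -/
def cloneSets (C : Set α) {n : ℕ} (R : Fin n → α → α → Prop) : Set (Set α) :=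
  {X | IsCloneSet C R X}

/-- `X` and `Y` intersect non-trivially. -/
def Bowtie (X Y : Set α) : Prop :=
  (X ∩ Y).Nonempty ∧ (X \ Y).Nonempty ∧ (Y \ X).Nonempty

/-- `Z` is a proper minimal superset of `X` in the family `𝓕`. -/
def IsProperMinimalSuperset (𝓕 : Set (Set α)) (X Z : Set α) : Prop :=
  Z ∈ 𝓕 ∧ X ⊆ Z ∧ X ≠ Z ∧ ∀ Y ∈ 𝓕, X ⊆ Y → Y ⊆ Z → Y = X ∨ Y = Z

/-- The family `𝓕` contains a bicycle chain. -/
def HasBicycleChain (𝓕 : Set (Set α)) : Prop :=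
  ∃ (k : ℕ) (A : ZMod k → Set α), 3 ≤ k ∧ (∀ i, A i ∈ 𝓕) ∧
    ∀ i : ZMod k,
      Bowtie (A (i - 1)) (A i) ∧ A (i - 1) ∩ A i ∩ A (i + 1) = ∅ ∧
        A i ⊆ A (i - 1) ∪ A (i + 1)

/-- A family `𝓕` of subsets of `F` satisfies axioms A1–A5. -/
def SatisfiesAxioms (F : Set α) (𝓕 : Set (Set α)) : Prop :=
  (∀ X ∈ 𝓕, X ⊆ F) ∧
    ((∀ f ∈ F, ({f} : Set α) ∈ 𝓕) ∧ (∅ : Set α) ∉ 𝓕 ∧ F ∈ 𝓕) ∧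
    (∀ C₁ ∈ 𝓕, ∀ C₂ ∈ 𝓕, (C₁ ∩ C₂).Nonempty → C₁ ∪ C₂ ∈ 𝓕 ∧ C₁ ∩ C₂ ∈ 𝓕) ∧
    (∀ C₁ ∈ 𝓕, ∀ C₂ ∈ 𝓕, Bowtie C₁ C₂ → C₁ \ C₂ ∈ 𝓕 ∧ C₂ \ C₁ ∈ 𝓕) ∧
    (∀ X ∈ 𝓕, {Z | IsProperMinimalSuperset 𝓕 X Z}.encard ≤ 2) ∧
    ¬HasBicycleChain 𝓕

/-- `𝓒` is a clone structure over `C`. -/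
def IsCloneStructure (C : Set α) (𝓒 : Set (Set α)) : Prop :=
  ∃ (n : ℕ) (R : Fin n → α → α → Prop), IsProfile C R ∧ 𝓒 = cloneSets C R

/-!
A set is a clone set of a profile exactly when it is an interval of every order of the profile,
so the axioms for a clone structure reduce to facts about the intervals of one linear order.
A4 holds because the new points of two distinct minimal supersets of `X` lie on opposite sides
of `X`; A5 holds because the first point of a bicycle chain would lie in two overlapping links,
each with a private point after it.

Conversely, call a linear order compatible with `𝓕` if every member of `𝓕` is an interval of it.
By induction on `|F|`, compatible orders exist and each of their common intervals is a member;
one compatible order for each nonempty non-member then forms the required profile. For the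
induction, look at the maximal members other than `F`. If two of them, `M` and `M'`, meet, then
A4 and A5 leave no third one, every proper member lies in `M` or in `M'`, and it suffices to
consider the orders that follow an order of `M`, in which `M \ M'` precedes `M ∩ M'`, by an
order of `F \ M = M' \ M`. Otherwise they partition `F` into blocks containing all proper
members, and the blocks may be listed in any order, each one ordered compatibly.
-/

open Set

/-! ### Intervals of a linear order -/

namespace IsLinOn

variable {F : Set α} {r : α → α → Prop}

theorem asymm (h : IsLinOn F r) {a b : α} (ha : a ∈ F) (hb : b ∈ F) (hab : r a b) : ¬r b a :=
  fun hba => h.1 a ha (h.2.1 a ha b hb a ha hab hba)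

theorem rel_of_not_rel (h : IsLinOn F r) {a b : α} (ha : a ∈ F) (hb : b ∈ F) (hab : a ≠ b)
    (hn : ¬r a b) : r b a :=
  (h.2.2 a ha b hb hab).resolve_left hn

theorem swap (h : IsLinOn F r) : IsLinOn F (Function.swap r) :=
  ⟨h.1, fun a ha b hb c hc hab hbc => h.2.1 c hc b hb a ha hbc hab,
    fun a ha b hb hab => (h.2.2 a ha b hb hab).symm⟩

theorem of_isStrictTotalOrder [IsStrictTotalOrder α r] : IsLinOn F r :=
  ⟨fun a _ => irrefl a, fun _ _ _ _ _ _ => _root_.trans,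
    fun a _ b _ hab => (trichotomous a b).imp_right (Or.resolve_left · hab)⟩

theorem exists_min (h : IsLinOn F r) {U : Set α} (hUF : U ⊆ F) (hU : U.Finite)
    (hne : U.Nonempty) : ∃ μ ∈ U, ∀ x ∈ U, x ≠ μ → r μ x := by
  have := hU.to_subtype
  let s : U → U → Prop := fun x y => r x y
  have : IsTrans U s := ⟨fun x y z => h.2.1 x (hUF x.2) y (hUF y.2) z (hUF z.2)⟩
  have : Std.Irrefl s := ⟨fun x => h.1 x (hUF x.2)⟩
  obtain ⟨μ, -, hμ⟩ :=
    (Finite.wellFounded_of_trans_of_irrefl s).has_min univ ⟨⟨_, hne.some_mem⟩, trivial⟩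
  exact ⟨μ, μ.2, fun x hx hxμ =>
    h.rel_of_not_rel (hUF hx) (hUF μ.2) hxμ (hμ ⟨x, hx⟩ trivial)⟩

end IsLinOn

def IsInterval (F : Set α) (r : α → α → Prop) (X : Set α) : Prop :=
  ∀ a ∈ X, ∀ b ∈ X, ∀ c ∈ F, r a c → r c b → c ∈ X

namespace IsInterval

variable {F X Y Z Z' : Set α} {r : α → α → Prop}

theorem swap (h : IsInterval F r X) : IsInterval F (Function.swap r) X :=
  fun a ha b hb c hc hac hcb => h b hb a ha c hc hcb hac

theorem inter (hX : IsInterval F r X) (hY : IsInterval F r Y) : IsInterval F r (X ∩ Y) :=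
  fun a ha b hb c hc hac hcb => ⟨hX a ha.1 b hb.1 c hc hac hcb, hY a ha.2 b hb.2 c hc hac hcb⟩

theorem union (lin : IsLinOn F r) (hX : IsInterval F r X) (hY : IsInterval F r Y)
    (hXF : X ⊆ F) (hXY : (X ∩ Y).Nonempty) : IsInterval F r (X ∪ Y) := by
  obtain ⟨w, hwX, hwY⟩ := hXY
  intro a ha b hb c hc hac hcb
  obtain rfl | hcw := eq_or_ne c w
  · exact Or.inl hwX
  rcases lin.2.2 c hc w (hXF hwX) hcw with hcw | hwc
  · exact ha.imp (fun ha => hX a ha w hwX c hc hac hcw) fun ha => hY a ha w hwY c hc hac hcw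
  · exact hb.imp (fun hb => hX w hwX b hb c hc hwc hcb) fun hb => hY w hwY b hb c hc hwc hcb

theorem sdiff (lin : IsLinOn F r) (hX : IsInterval F r X) (hY : IsInterval F r Y)
    (hXF : X ⊆ F) (hYF : Y ⊆ F) (hYX : (Y \ X).Nonempty) : IsInterval F r (X \ Y) := by
  obtain ⟨y, hyY, hyX⟩ := hYX
  intro a ha b hb c hc hac hcb
  refine ⟨hX a ha.1 b hb.1 c hc hac hcb, fun hcY => ?_⟩
  have hya : y ≠ a := fun h => ha.2 (h ▸ hyY)
  have hyb : y ≠ b := fun h => hb.2 (h ▸ hyY)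
  rcases lin.2.2 y (hYF hyY) a (hXF ha.1) hya with hya | hay
  · exact ha.2 (hY y hyY c hcY a (hXF ha.1) hya hac)
  rcases lin.2.2 y (hYF hyY) b (hXF hb.1) hyb with hyb | hby
  · exact hyX (hX a ha.1 b hb.1 y (hYF hyY) hay hyb)
  · exact hb.2 (hY c hcY y hyY b (hXF hb.1) hcb hby)

theorem not_rel_of_rel (lin : IsLinOn F r) (hZ : IsInterval F r Z) (hZ' : IsInterval F r Z')
    (hZF : Z ⊆ F) (hZ'F : Z' ⊆ F) {x d d' : α} (hx : x ∈ Z ∩ Z') (hd : d ∈ Z \ Z')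
    (hd' : d' ∈ Z' \ Z) (hxd : r x d) : ¬r x d' := by
  intro hxd'
  have hne : d ≠ d' := fun h => hd.2 (h ▸ hd'.1)
  rcases lin.2.2 d (hZF hd.1) d' (hZ'F hd'.1) hne with h | h
  · exact hd.2 (hZ' x hx.2 d' hd'.1 d (hZF hd.1) hxd h)
  · exact hd'.2 (hZ x hx.1 d hd.1 d' (hZ'F hd'.1) hxd' h)

theorem rel_iff_not_rel (lin : IsLinOn F r) (hZ : IsInterval F r Z) (hZ' : IsInterval F r Z')
    (hZF : Z ⊆ F) (hZ'F : Z' ⊆ F) {x d d' : α} (hx : x ∈ Z ∩ Z') (hd : d ∈ Z \ Z')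
    (hd' : d' ∈ Z' \ Z) : r x d ↔ ¬r x d' := by
  have hxF := hZF hx.1
  refine ⟨hZ.not_rel_of_rel lin hZ' hZF hZ'F hx hd hd', fun h => ?_⟩
  have hd'x := lin.rel_of_not_rel hxF (hZ'F hd'.1) (fun h' => hd'.2 (h' ▸ hx.1)) h
  have hdx := hZ'.swap.not_rel_of_rel lin.swap hZ.swap hZ'F hZF ⟨hx.2, hx.1⟩ hd' hd hd'x
  exact lin.rel_of_not_rel (hZF hd.1) hxF (fun h' => hd.2 (h' ▸ hx.2)) hdx

end IsInterval

def Precedes (r : α → α → Prop) (A C : Set α) : Prop :=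
  ∀ a ∈ A, ∀ c ∈ C, r a c

theorem IsInterval.precedes_or_precedes_swap {F X Y : Set α} {r : α → α → Prop}
    (lin : IsLinOn F r) (hX : IsInterval F r X) (hY : IsInterval F r Y) (hXF : X ⊆ F)
    (hYF : Y ⊆ F) (hXY : Disjoint X Y) : Precedes r X Y ∨ Precedes (Function.swap r) X Y := by
  unfold Precedes
  by_contra! h
  obtain ⟨⟨a, ha, b, hb, hab⟩, ⟨a', ha', b', hb', hba'⟩⟩ := h
  have hne : ∀ {x y}, x ∈ X → y ∈ Y → x ≠ y := fun hx hy h => hXY.ne_of_mem hx hy h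
  have hba := lin.rel_of_not_rel (hXF ha) (hYF hb) (hne ha hb) hab
  have hab' := lin.rel_of_not_rel (hYF hb') (hXF ha') (hne ha' hb').symm hba'
  rcases lin.2.2 a (hXF ha) b' (hYF hb') (hne ha hb') with h | h
  · exact hne ha (hY b hb b' hb' a (hXF ha) hba h) rfl
  · exact hne (hX a' ha' a ha b' (hYF hb') hab' h) hb' rfl

theorem isInterval_iff_forall_rel_iff {F X : Set α} {r : α → α → Prop} (lin : IsLinOn F r)
    (hXF : X ⊆ F) :
    IsInterval F r X ↔ ∀ c ∈ X, ∀ c' ∈ X, ∀ a ∈ F \ X, (r c a ↔ r c' a) := by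
  constructor
  · intro h c hc c' hc' a ha
    have key : ∀ c ∈ X, ∀ c' ∈ X, r c a → r c' a := fun c hc c' hc' hca => by
      by_contra hn
      exact ha.2 (h c hc c' hc' a ha.1 hca
        (lin.rel_of_not_rel (hXF hc') ha.1 (fun h' => ha.2 (h' ▸ hc')) hn))
    exact ⟨key c hc c' hc', key c' hc' c hc⟩
  · intro h a ha b hb c hc hac hcb
    by_contra hcX
    exact lin.asymm hc (hXF hb) hcb ((h a ha b hb c ⟨hc, hcX⟩).1 hac)

/-! ### Clone sets satisfy the axioms -/

theorem Set.encard_le_two_iff {β : Type*} {s : Set β} :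
    s.encard ≤ 2 ↔ ∀ a ∈ s, ∀ b ∈ s, ∀ c ∈ s, a = b ∨ a = c ∨ b = c := by
  constructor
  · intro h a ha b hb c hc
    by_contra! hne
    have h3 : ({a, b, c} : Set β).encard = 3 :=
      encard_eq_three.2 ⟨a, b, c, hne.1, hne.2.1, hne.2.2, rfl⟩
    have hsub : {a, b, c} ⊆ s := insert_subset ha (insert_subset hb (singleton_subset_iff.2 hc))
    have := (h3 ▸ encard_le_encard hsub).trans h
    norm_num at this
  · intro h
    by_contra! hlt
    obtain ⟨t, hts, ht⟩ := exists_subset_encard_eq (Order.add_one_le_of_lt hlt)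
    obtain ⟨a, b, c, hab, hac, hbc, rfl⟩ := encard_eq_three.1 ht
    rcases h a (hts (by simp)) b (hts (by simp)) c (hts (by simp)) with h | h | h <;> contradiction

theorem IsProperMinimalSuperset.inter_eq {𝓕 : Set (Set α)} {X Z Z' : Set α}
    (hZ : IsProperMinimalSuperset 𝓕 X Z) (hZ' : IsProperMinimalSuperset 𝓕 X Z') (hne : Z ≠ Z')
    (hmem : Z ∩ Z' ∈ 𝓕) : Z ∩ Z' = X := by
  rcases hZ.2.2.2 _ hmem (subset_inter hZ.2.1 hZ'.2.1) inter_subset_left with h | h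
  · exact h
  · rcases hZ'.2.2.2 Z hZ.1 hZ.2.1 (inter_eq_left.1 h) with h' | h'
    · exact absurd h'.symm hZ.2.2.1
    · exact absurd h' hne

theorem Bowtie.symm {X Y : Set α} (h : Bowtie X Y) : Bowtie Y X :=
  ⟨by rw [inter_comm]; exact h.1, h.2.2, h.2.1⟩

section CloneSets

variable {F X Y : Set α} {n : ℕ} {R : Fin n → α → α → Prop}

theorem mem_cloneSets_iff (hR : IsProfile F R) :
    X ∈ cloneSets F R ↔ X.Nonempty ∧ X ⊆ F ∧ ∀ i, IsInterval F (R i) X := by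
  refine and_congr_right fun _ => and_congr_right fun hXF => ?_
  exact ⟨fun h i => (isInterval_iff_forall_rel_iff (hR.2 i) hXF).2
      fun c hc c' hc' a ha => h c hc c' hc' a ha i,
    fun h c hc c' hc' a ha i =>
      (isInterval_iff_forall_rel_iff (hR.2 i) hXF).1 (h i) c hc c' hc' a ha⟩

variable (hR : IsProfile F R)
include hR

theorem singleton_mem_cloneSets {f : α} (hf : f ∈ F) : {f} ∈ cloneSets F R :=
  (mem_cloneSets_iff hR).2 ⟨singleton_nonempty f, singleton_subset_iff.2 hf,
    fun i a ha _ hb c hc hac hcb => by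
      rw [mem_singleton_iff] at ha hb
      subst ha hb
      exact absurd hcb ((hR.2 i).asymm hf hc hac)⟩

theorem self_mem_cloneSets (hne : F.Nonempty) : F ∈ cloneSets F R :=
  (mem_cloneSets_iff hR).2 ⟨hne, subset_rfl, fun _ _ _ _ _ _ hc _ _ => hc⟩

theorem union_mem_cloneSets (hX : X ∈ cloneSets F R) (hY : Y ∈ cloneSets F R)
    (hXY : (X ∩ Y).Nonempty) : X ∪ Y ∈ cloneSets F R := by
  rw [mem_cloneSets_iff hR] at *
  exact ⟨hX.1.mono subset_union_left, union_subset hX.2.1 hY.2.1,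
    fun i => (hX.2.2 i).union (hR.2 i) (hY.2.2 i) hX.2.1 hXY⟩

theorem inter_mem_cloneSets (hX : X ∈ cloneSets F R) (hY : Y ∈ cloneSets F R)
    (hXY : (X ∩ Y).Nonempty) : X ∩ Y ∈ cloneSets F R := by
  rw [mem_cloneSets_iff hR] at *
  exact ⟨hXY, inter_subset_left.trans hX.2.1, fun i => (hX.2.2 i).inter (hY.2.2 i)⟩

theorem sdiff_mem_cloneSets (hX : X ∈ cloneSets F R) (hY : Y ∈ cloneSets F R)
    (hXY : Bowtie X Y) : X \ Y ∈ cloneSets F R := by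
  rw [mem_cloneSets_iff hR] at *
  exact ⟨hXY.2.1, sdiff_subset.trans hX.2.1,
    fun i => (hX.2.2 i).sdiff (hR.2 i) (hY.2.2 i) hX.2.1 hY.2.1 hXY.2.2⟩

theorem encard_properMinimalSupersets_cloneSets_le (hX : X ∈ cloneSets F R) :
    {Z | IsProperMinimalSuperset (cloneSets F R) X Z}.encard ≤ 2 := by
  obtain ⟨x, hx⟩ := hX.1
  let i₀ : Fin n := ⟨0, hR.1⟩
  have hint : ∀ {Z}, Z ∈ cloneSets F R → IsInterval F (R i₀) Z :=
    fun hZ => ((mem_cloneSets_iff hR).1 hZ).2.2 i₀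
  have opposite : ∀ {Z Z'}, IsProperMinimalSuperset (cloneSets F R) X Z →
      IsProperMinimalSuperset (cloneSets F R) X Z' → Z ≠ Z' →
      ∀ d ∈ Z \ X, ∀ d' ∈ Z' \ X, (R i₀ x d ↔ ¬R i₀ x d') := by
    intro Z Z' hZ hZ' hne d hd d' hd'
    have hZZ' := hZ.inter_eq hZ' hne
      (inter_mem_cloneSets hR hZ.1 hZ'.1 ⟨x, hZ.2.1 hx, hZ'.2.1 hx⟩)
    exact (hint hZ.1).rel_iff_not_rel (hR.2 i₀) (hint hZ'.1) hZ.1.2.1 hZ'.1.2.1 (hZZ' ▸ hx)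
      ⟨hd.1, fun h => hd.2 (hZZ' ▸ ⟨hd.1, h⟩)⟩ ⟨hd'.1, fun h => hd'.2 (hZZ' ▸ ⟨h, hd'.1⟩)⟩
  have new : ∀ {Z}, IsProperMinimalSuperset (cloneSets F R) X Z → (Z \ X).Nonempty :=
    fun hZ => sdiff_nonempty.2 fun h => hZ.2.2.1 (subset_antisymm hZ.2.1 h)
  rw [Set.encard_le_two_iff]
  intro Z₁ h₁ Z₂ h₂ Z₃ h₃
  by_contra! hne
  obtain ⟨d₁, hd₁⟩ := new h₁
  obtain ⟨d₂, hd₂⟩ := new h₂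
  obtain ⟨d₃, hd₃⟩ := new h₃
  have := opposite h₁ h₂ hne.1 d₁ hd₁ d₂ hd₂
  have := opposite h₁ h₃ hne.2.1 d₁ hd₁ d₃ hd₃
  have := opposite h₂ h₃ hne.2.2 d₂ hd₂ d₃ hd₃
  tauto

theorem not_hasBicycleChain_cloneSets (hF : F.Finite) : ¬HasBicycleChain (cloneSets F R) := by
  rintro ⟨k, A, hk, hA, hch⟩
  have : NeZero k := ⟨by omega⟩
  let i₀ : Fin n := ⟨0, hR.1⟩
  have lin := hR.2 i₀
  have hAF : ∀ i, A i ⊆ F := fun i => (hA i).2.1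
  have hint : ∀ i, IsInterval F (R i₀) (A i) :=
    fun i => ((mem_cloneSets_iff hR).1 (hA i)).2.2 i₀
  have hUF : (⋃ i, A i) ⊆ F := iUnion_subset hAF
  obtain ⟨μ, hμU, hmin⟩ := lin.exists_min hUF (hF.subset hUF)
    ⟨_, mem_iUnion.2 ⟨0, (hch 0).1.1.some_mem.2⟩⟩
  have key : ∀ i, μ ∉ A (i - 1) ∩ A i := by
    intro i hμ
    obtain ⟨-, ⟨d, hd⟩, ⟨d', hd'⟩⟩ := (hch i).1
    have hfirst : ∀ j, ∀ y ∈ A j, y ∉ A (i - 1) ∩ A i → R i₀ μ y := fun j y hy hy' =>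
      hmin y (mem_iUnion.2 ⟨j, hy⟩) fun h => hy' (h ▸ hμ)
    exact (hint _).not_rel_of_rel lin (hint i) (hAF _) (hAF i) hμ hd hd'
      (hfirst _ d hd.1 fun h => hd.2 h.2) (hfirst _ d' hd'.1 fun h => hd'.2 h.1)
  obtain ⟨j, hj⟩ := mem_iUnion.1 hμU
  rcases (hch j).2.2 hj with h | h
  · exact key j ⟨h, hj⟩
  · exact key (j + 1) ⟨by rwa [add_sub_cancel_right], h⟩

theorem satisfiesAxioms_cloneSets (hF : F.Finite) (hne : F.Nonempty) :
    SatisfiesAxioms F (cloneSets F R) :=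
  ⟨fun _ hX => hX.2.1,
    ⟨fun _ hf => singleton_mem_cloneSets hR hf, fun h => not_nonempty_empty h.1,
      self_mem_cloneSets hR hne⟩,
    fun _ hX _ hY h => ⟨union_mem_cloneSets hR hX hY h, inter_mem_cloneSets hR hX hY h⟩,
    fun _ hX _ hY h => ⟨sdiff_mem_cloneSets hR hX hY h, sdiff_mem_cloneSets hR hY hX h.symm⟩,
    fun _ hX => encard_properMinimalSupersets_cloneSets_le hR hX,
    not_hasBicycleChain_cloneSets hR hF⟩

end CloneSets

/-! ### Consequences of the axioms -/

theorem HasBicycleChain.mono {𝓖 𝓕 : Set (Set α)} (h : 𝓖 ⊆ 𝓕) :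
    HasBicycleChain 𝓖 → HasBicycleChain 𝓕 :=
  fun ⟨k, A, hk, hA, hch⟩ => ⟨k, A, hk, fun i => h (hA i), hch⟩

theorem hasBicycleChain_of_triangle {𝓕 : Set (Set α)} {A B C : Set α}
    (hA : A ∈ 𝓕) (hB : B ∈ 𝓕) (hC : C ∈ 𝓕) (hAB : Bowtie A B) (hBC : Bowtie B C)
    (hCA : Bowtie C A) (hABC : A ∩ B ∩ C = ∅)
    (hA' : A ⊆ C ∪ B) (hB' : B ⊆ A ∪ C) (hC' : C ⊆ B ∪ A) : HasBicycleChain 𝓕 := by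
  refine ⟨3, ![A, B, C], le_rfl, ?_, ?_⟩
  · intro i; fin_cases i <;> assumption
  · have hBCA : B ∩ C ∩ A = ∅ := by rw [inter_comm, ← inter_assoc]; exact hABC
    have hCAB : C ∩ A ∩ B = ∅ := by rw [inter_assoc, inter_comm]; exact hABC
    intro i
    fin_cases i
    · exact ⟨hCA, hCAB, hA'⟩
    · exact ⟨hAB, hABC, hB'⟩
    · exact ⟨hBC, hBCA, hC'⟩

theorem bowtie_of_maximal {S : Set (Set α)} {M N : Set α} (hM : Maximal (· ∈ S) M)
    (hN : Maximal (· ∈ S) N) (hne : M ≠ N) (hMN : (M ∩ N).Nonempty) : Bowtie M N :=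
  ⟨hMN, sdiff_nonempty.2 fun h => hne (hM.eq_of_subset hN.prop h),
    sdiff_nonempty.2 fun h => hne (hN.eq_of_subset hM.prop h).symm⟩

namespace SatisfiesAxioms

variable {F : Set α} {𝓕 : Set (Set α)} (hax : SatisfiesAxioms F 𝓕)
include hax

theorem subset_of_mem {Y : Set α} (hY : Y ∈ 𝓕) : Y ⊆ F := hax.1 Y hY

theorem singleton_mem {f : α} (hf : f ∈ F) : {f} ∈ 𝓕 := hax.2.1.1 f hf

theorem self_mem : F ∈ 𝓕 := hax.2.1.2.2

theorem nonempty_of_mem {Y : Set α} (hY : Y ∈ 𝓕) : Y.Nonempty :=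
  nonempty_iff_ne_empty.2 fun h => hax.2.1.2.1 (h ▸ hY)

theorem union_mem {X Y : Set α} (hX : X ∈ 𝓕) (hY : Y ∈ 𝓕) (h : (X ∩ Y).Nonempty) :
    X ∪ Y ∈ 𝓕 :=
  (hax.2.2.1 X hX Y hY h).1

theorem inter_mem {X Y : Set α} (hX : X ∈ 𝓕) (hY : Y ∈ 𝓕) (h : (X ∩ Y).Nonempty) :
    X ∩ Y ∈ 𝓕 :=
  (hax.2.2.1 X hX Y hY h).2

theorem sdiff_mem {X Y : Set α} (hX : X ∈ 𝓕) (hY : Y ∈ 𝓕) (h : Bowtie X Y) : X \ Y ∈ 𝓕 :=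
  (hax.2.2.2.1 X hX Y hY h).1

theorem encard_properMinimalSupersets_le {X : Set α} (hX : X ∈ 𝓕) :
    {Z | IsProperMinimalSuperset 𝓕 X Z}.encard ≤ 2 :=
  hax.2.2.2.2.1 X hX

theorem not_hasBicycleChain : ¬HasBicycleChain 𝓕 := hax.2.2.2.2.2

theorem inter_powerset {Y : Set α} (hY : Y ∈ 𝓕) : SatisfiesAxioms Y (𝓕 ∩ 𝒫 Y) := by
  obtain ⟨hsub, ⟨hsing, hemp, -⟩, hA2, hA3, hA4, hA5⟩ := hax
  refine ⟨fun X hX => hX.2,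
    ⟨fun f hf => ⟨hsing f (hsub Y hY hf), singleton_subset_iff.2 hf⟩, fun h => hemp h.1,
      ⟨hY, mem_powerset subset_rfl⟩⟩,
    fun C₁ h₁ C₂ h₂ h => ⟨⟨(hA2 _ h₁.1 _ h₂.1 h).1, union_subset h₁.2 h₂.2⟩,
      ⟨(hA2 _ h₁.1 _ h₂.1 h).2, inter_subset_left.trans h₁.2⟩⟩,
    fun C₁ h₁ C₂ h₂ h => ⟨⟨(hA3 _ h₁.1 _ h₂.1 h).1, sdiff_subset.trans h₁.2⟩,
      ⟨(hA3 _ h₁.1 _ h₂.1 h).2, sdiff_subset.trans h₂.2⟩⟩,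
    fun X hX => (encard_le_encard fun Z hZ => ?_).trans (hA4 X hX.1),
    fun h => hA5 (h.mono inter_subset_left)⟩
  exact ⟨hZ.1.1, hZ.2.1, hZ.2.2.1, fun W hW hXW hWZ => hZ.2.2.2 W ⟨hW, hWZ.trans hZ.1.2⟩ hXW hWZ⟩

variable (hF : F.Finite)
include hF

theorem exists_maximal_superset {Y : Set α} (hY : Y ∈ 𝓕 \ {F}) :
    ∃ M, Y ⊆ M ∧ Maximal (· ∈ 𝓕 \ {F}) M :=
  (hF.finite_subsets.subset fun _ => hax.subset_of_mem).sdiff.exists_le_maximal hY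

theorem exists_properMinimalSuperset_subset {T P : Set α} (hP : P ∈ 𝓕)
    (hTP : T ⊂ P) : ∃ Z, IsProperMinimalSuperset 𝓕 T Z ∧ Z ⊆ P := by
  obtain ⟨Z, hZP, hZ⟩ := ((hF.finite_subsets.subset fun _ => hax.subset_of_mem).subset
    (fun W (hW : W ∈ 𝓕 ∧ T ⊂ W ∧ W ⊆ P) => hW.1)).exists_le_minimal ⟨hP, hTP, subset_rfl⟩
  refine ⟨Z, ⟨hZ.prop.1, hZ.prop.2.1.subset, hZ.prop.2.1.ne, fun W hW hTW hWZ => ?_⟩, hZP⟩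
  rcases eq_or_ne W T with h | h
  · exact Or.inl h
  · exact Or.inr (hZ.eq_of_subset ⟨hW, ssubset_of_subset_of_ne hTW h.symm,
      hWZ.trans hZ.prop.2.2⟩ hWZ)

variable {M M' N : Set α}

omit hF in
theorem union_eq_of_maximal (hM : Maximal (· ∈ 𝓕 \ {F}) M) (hN : Maximal (· ∈ 𝓕 \ {F}) N)
    (hne : M ≠ N) (hMN : (M ∩ N).Nonempty) : M ∪ N = F := by
  by_contra h
  have hU : M ∪ N ∈ 𝓕 \ {F} := ⟨hax.union_mem hM.prop.1 hN.prop.1 hMN, h⟩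
  exact hne ((hM.eq_of_subset hU subset_union_left).trans
    (hN.eq_of_subset hU subset_union_right).symm)

omit hF in
theorem inter_nonempty_of_maximal (hM' : Maximal (· ∈ 𝓕 \ {F}) M')
    (hU : M ∪ M' = F) (hN : Maximal (· ∈ 𝓕 \ {F}) N) (hne : N ≠ M') : (N ∩ M).Nonempty := by
  by_contra h
  refine hne (hN.eq_of_subset hM'.prop fun x hx => ?_)
  have hxF := hax.subset_of_mem hN.prop.1 hx
  rw [← hU] at hxF
  exact hxF.resolve_left fun hxM => h ⟨x, hx, hxM⟩

omit hF in
theorem exists_mem_inter_not_mem {A B C : Set α} (hA : A ∪ C = F) (hB : B ∪ C = F)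
    (hC : C ∈ 𝓕 \ {F}) : ∃ x ∈ A ∩ B, x ∉ C := by
  obtain ⟨x, hxF, hxC⟩ :=
    sdiff_nonempty.2 fun h => hC.2 (subset_antisymm (hax.subset_of_mem hC.1) h)
  have hxA : x ∈ A ∪ C := hA ▸ hxF
  have hxB : x ∈ B ∪ C := hB ▸ hxF
  exact ⟨x, ⟨hxA.resolve_right hxC, hxB.resolve_right hxC⟩, hxC⟩

theorem not_three_ssupersets {T P₁ P₂ P₃ : Set α} (hT : T ∈ 𝓕) (hP₁ : P₁ ∈ 𝓕) (hP₂ : P₂ ∈ 𝓕)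
    (hP₃ : P₃ ∈ 𝓕) (h₁ : T ⊂ P₁) (h₂ : T ⊂ P₂) (h₃ : T ⊂ P₃) (h₁₂ : P₁ ∩ P₂ ⊆ T)
    (h₁₃ : P₁ ∩ P₃ ⊆ T) (h₂₃ : P₂ ∩ P₃ ⊆ T) : False := by
  obtain ⟨Z₁, hZ₁, hZ₁P⟩ := hax.exists_properMinimalSuperset_subset hF hP₁ h₁
  obtain ⟨Z₂, hZ₂, hZ₂P⟩ := hax.exists_properMinimalSuperset_subset hF hP₂ h₂
  obtain ⟨Z₃, hZ₃, hZ₃P⟩ := hax.exists_properMinimalSuperset_subset hF hP₃ h₃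
  have hne : ∀ {Z Z' P P' : Set α}, IsProperMinimalSuperset 𝓕 T Z → Z ⊆ P → Z' ⊆ P' →
      P ∩ P' ⊆ T → Z ≠ Z' := fun hZ hZP hZ'P' hPP' h =>
    hZ.2.2.1 (subset_antisymm hZ.2.1 fun x hx => hPP' ⟨hZP hx, hZ'P' (h ▸ hx)⟩)
  rcases Set.encard_le_two_iff.1 (hax.encard_properMinimalSupersets_le hT) Z₁ hZ₁ Z₂ hZ₂ Z₃ hZ₃
    with h | h | h
  exacts [hne hZ₁ hZ₁P hZ₂P h₁₂ h, hne hZ₁ hZ₁P hZ₃P h₁₃ h, hne hZ₂ hZ₂P hZ₃P h₂₃ h]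

/-- Three maximal proper members, two of which meet, either have a common point, whose minimal
supersets their pairwise intersections separate (against A4), or form a bicycle chain. -/
theorem not_three_maximal (hM : Maximal (· ∈ 𝓕 \ {F}) M) (hM' : Maximal (· ∈ 𝓕 \ {F}) M')
    (hN : Maximal (· ∈ 𝓕 \ {F}) N) (h₁ : M ≠ M') (h₂ : M ≠ N) (h₃ : M' ≠ N)
    (hMM' : (M ∩ M').Nonempty) : False := by
  have hU₁ := hax.union_eq_of_maximal hM hM' h₁ hMM'
  have hMN : (M ∩ N).Nonempty := by
    rw [inter_comm]; exact hax.inter_nonempty_of_maximal hM' hU₁ hN h₃.symm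
  have hM'N : (M' ∩ N).Nonempty := by
    rw [inter_comm]; exact hax.inter_nonempty_of_maximal hM (union_comm M M' ▸ hU₁) hN h₂.symm
  have hU₂ := hax.union_eq_of_maximal hM hN h₂ hMN
  have hU₃ := hax.union_eq_of_maximal hM' hN h₃ hM'N
  by_cases hT : (M ∩ M' ∩ N).Nonempty
  · have hP₁ : M ∩ M' ∈ 𝓕 := hax.inter_mem hM.prop.1 hM'.prop.1 hMM'
    obtain ⟨x₁, hx₁, hx₁N⟩ := hax.exists_mem_inter_not_mem hU₂ hU₃ hN.prop
    obtain ⟨x₂, hx₂, hx₂M'⟩ := hax.exists_mem_inter_not_mem hU₁ (union_comm M' N ▸ hU₃) hM'.prop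
    obtain ⟨x₃, hx₃, hx₃M⟩ := hax.exists_mem_inter_not_mem (union_comm M M' ▸ hU₁)
      (union_comm M N ▸ hU₂) hM.prop
    exact hax.not_three_ssupersets hF (hax.inter_mem hP₁ hN.prop.1 hT) hP₁
      (hax.inter_mem hM.prop.1 hN.prop.1 hMN) (hax.inter_mem hM'.prop.1 hN.prop.1 hM'N)
      ((ssubset_iff_of_subset inter_subset_left).2 ⟨x₁, hx₁, fun h => hx₁N h.2⟩)
      ((ssubset_iff_of_subset (t := M ∩ N) fun x hx => ⟨hx.1.1, hx.2⟩).2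
        ⟨x₂, hx₂, fun h => hx₂M' h.1.2⟩)
      ((ssubset_iff_of_subset (t := M' ∩ N) fun x hx => ⟨hx.1.2, hx.2⟩).2
        ⟨x₃, hx₃, fun h => hx₃M h.1.1⟩)
      (fun x hx => ⟨hx.1, hx.2.2⟩) (fun x hx => ⟨hx.1, hx.2.2⟩)
      fun x hx => ⟨⟨hx.1.1, hx.2.1⟩, hx.1.2⟩
  · have cover : ∀ {A B C : Set α}, A ∈ 𝓕 → B ∪ C = F → A ⊆ B ∪ C :=
      fun hA hBC => hBC ▸ hax.subset_of_mem hA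
    exact hax.not_hasBicycleChain (hasBicycleChain_of_triangle hM.prop.1 hM'.prop.1 hN.prop.1
      (bowtie_of_maximal hM hM' h₁ hMM') (bowtie_of_maximal hM' hN h₃ hM'N)
      (bowtie_of_maximal hN hM h₂.symm (inter_comm M N ▸ hMN)) (not_nonempty_iff_eq_empty.1 hT)
      (cover hM.prop.1 (union_comm M' N ▸ hU₃)) (cover hM'.prop.1 hU₂)
      (cover hN.prop.1 (union_comm M M' ▸ hU₁)))

theorem subset_or_subset_of_maximal (hM : Maximal (· ∈ 𝓕 \ {F}) M)
    (hM' : Maximal (· ∈ 𝓕 \ {F}) M') (hne : M ≠ M') (hMM' : (M ∩ M').Nonempty) {Y : Set α}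
    (hY : Y ∈ 𝓕 \ {F}) : Y ⊆ M ∨ Y ⊆ M' := by
  obtain ⟨N, hYN, hN⟩ := hax.exists_maximal_superset hF hY
  by_cases h₂ : M = N
  · exact Or.inl (h₂ ▸ hYN)
  by_cases h₃ : M' = N
  · exact Or.inr (h₃ ▸ hYN)
  exact (hax.not_three_maximal hF hM hM' hN hne h₂ h₃ hMM').elim

end SatisfiesAxioms

/-! ### Lexicographic orders -/

section Lex

variable {β : Type*}

def labelLex (g : α → β) (L : β → β → Prop) (o : β → α → α → Prop) : α → α → Prop :=
  fun x y => L (g x) (g y) ∨ (g x = g y ∧ o (g x) x y)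

theorem isLinOn_labelLex {F : Set α} {g : α → β} {L : β → β → Prop} {o : β → α → α → Prop}
    (hL : IsLinOn (g '' F) L) (ho : ∀ x ∈ F, IsLinOn {y ∈ F | g y = g x} (o (g x))) :
    IsLinOn F (labelLex g L o) := by
  have hg : ∀ {x}, x ∈ F → g x ∈ g '' F := mem_image_of_mem g
  refine ⟨?_, ?_, fun a ha b hb hab => ?_⟩
  · rintro a ha (h | ⟨-, h⟩)
    · exact hL.1 _ (hg ha) h
    · exact (ho a ha).1 a ⟨ha, rfl⟩ h
  · rintro a ha b hb c hc (hab | ⟨hab, oab⟩) (hbc | ⟨hbc, obc⟩)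
    · exact Or.inl (hL.2.1 _ (hg ha) _ (hg hb) _ (hg hc) hab hbc)
    · exact Or.inl (hbc ▸ hab)
    · exact Or.inl (hab ▸ hbc)
    · exact Or.inr ⟨hab.trans hbc, (ho a ha).2.1 a ⟨ha, rfl⟩ b ⟨hb, hab.symm⟩ c
        ⟨hc, (hab.trans hbc).symm⟩ oab (hab ▸ obc)⟩
  · by_cases h : g a = g b
    · rcases (ho a ha).2.2 a ⟨ha, rfl⟩ b ⟨hb, h.symm⟩ hab with h' | h'
      · exact Or.inl (Or.inr ⟨h, h'⟩)
      · exact Or.inr (Or.inr ⟨h.symm, h ▸ h'⟩)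
    · exact (hL.2.2 _ (hg ha) _ (hg hb) h).imp Or.inl Or.inl

variable [DecidableEq β]

/-- A linear order on `β` in which `P₁` comes first and `P₂` second. -/
def frontOrd (P₁ P₂ : β) : β → β → Prop :=
  labelLex (fun P => if P = P₁ then 0 else if P = P₂ then 1 else 2) (· < ·) fun _ => WellOrderingRel

theorem isLinOn_frontOrd {S : Set β} (P₁ P₂ : β) : IsLinOn S (frontOrd P₁ P₂) :=
  isLinOn_labelLex IsLinOn.of_isStrictTotalOrder fun _ _ => IsLinOn.of_isStrictTotalOrder

theorem frontOrd_irrefl (P₁ P₂ Q : β) : ¬frontOrd P₁ P₂ Q Q :=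
  (isLinOn_frontOrd (S := univ) P₁ P₂).1 Q trivial

theorem frontOrd_first {P₁ Q : β} (P₂ : β) (h : Q ≠ P₁) : frontOrd P₁ P₂ P₁ Q :=
  Or.inl (by simp only [if_pos, if_neg h]; split_ifs <;> omega)

theorem frontOrd_second {P₁ P₂ Q : β} (h : P₂ ≠ P₁) (h₁ : Q ≠ P₁) (h₂ : Q ≠ P₂) :
    frontOrd P₁ P₂ P₂ Q :=
  Or.inl (by simp only [if_neg h, if_neg h₁, if_neg h₂, if_pos]; omega)

end Lex

def IsBlockMap (F : Set α) (blk : α → Set α) : Prop :=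
  ∀ x ∈ F, x ∈ blk x ∧ blk x ⊆ F ∧ ∀ y ∈ blk x, blk y = blk x

namespace IsBlockMap

variable {F Y : Set α} {blk : α → Set α} {L : Set α → Set α → Prop} {o : Set α → α → α → Prop}
  {x : α} (hblk : IsBlockMap F blk)
include hblk

theorem fiber_eq (hx : x ∈ F) : {y ∈ F | blk y = blk x} = blk x :=
  Set.ext fun y => ⟨fun ⟨hy, h⟩ => h ▸ (hblk y hy).1,
    fun hy => ⟨(hblk x hx).2.1 hy, (hblk x hx).2.2 y hy⟩⟩

theorem isLinOn_labelLex (hL : IsLinOn (blk '' F) L) (ho : ∀ x ∈ F, IsLinOn (blk x) (o (blk x))) :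
    IsLinOn F (labelLex blk L o) :=
  _root_.isLinOn_labelLex hL fun x hx => by rw [hblk.fiber_eq hx]; exact ho x hx

theorem isInterval_labelLex (hL : IsLinOn (blk '' F) L) (hx : x ∈ F) (hY : Y ⊆ blk x)
    (h : IsInterval (blk x) (o (blk x)) Y) : IsInterval F (labelLex blk L o) Y := by
  have hblk_eq : ∀ y ∈ blk x, blk y = blk x := (hblk x hx).2.2
  have hbx : blk x ∈ blk '' F := mem_image_of_mem blk hx
  intro a ha b hb c hc hac hcb
  simp only [labelLex, hblk_eq a (hY ha), hblk_eq b (hY hb)] at hac hcb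
  have hcx : blk c = blk x := by
    rcases hac with hac | ⟨hac, -⟩
    · rcases hcb with hcb | ⟨hcb, -⟩
      · exact absurd hcb (hL.asymm hbx (mem_image_of_mem blk hc) hac)
      · exact absurd (hcb ▸ hac) (hL.1 _ hbx)
    · exact hac.symm
  have hcb' := hcb.resolve_left fun h => hL.1 _ hbx (hcx ▸ h)
  have hac' := hac.resolve_left fun h => hL.1 _ hbx (hcx ▸ h)
  exact h a ha b hb c (hcx ▸ (hblk c hc).1) hac'.2 (hcx ▸ hcb'.2)

theorem isInterval_of_labelLex (hx : x ∈ F) (hY : Y ⊆ blk x)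
    (h : IsInterval F (labelLex blk L o) Y) :
    IsInterval (blk x) (o (blk x)) Y := by
  have hblk_eq : ∀ y ∈ blk x, blk y = blk x := (hblk x hx).2.2
  intro a ha b hb c hc hac hcb
  refine h a ha b hb c ((hblk x hx).2.1 hc) (Or.inr ⟨?_, ?_⟩) (Or.inr ⟨?_, ?_⟩)
  all_goals simp only [hblk_eq a (hY ha), hblk_eq b (hY hb), hblk_eq c hc, hac, hcb]

end IsBlockMap

open Classical in
/-- The order `o₁` on `M` followed by the order `o₂` on `F \ M`. -/
noncomputable def concatOrd (F M : Set α) (o₁ o₂ : α → α → Prop) : α → α → Prop :=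
  labelLex (fun x => if x ∈ M then M else F \ M) (frontOrd M M) fun B => if B = M then o₁ else o₂

theorem sdiff_ne_of_nonempty {F M : Set α} (hM : M.Nonempty) : F \ M ≠ M := fun h =>
  ((Set.ext_iff.1 h hM.some).2 hM.some_mem).2 hM.some_mem

namespace concatOrd

variable {F M Y : Set α} {o₁ o₂ : α → α → Prop} {a c e m : α}

open Classical in
theorem isBlockMap (hMF : M ⊆ F) : IsBlockMap F (fun x => if x ∈ M then M else F \ M) := by
  intro x hx
  by_cases hxM : x ∈ M
  · simp only [hxM]
    exact ⟨hxM, hMF, fun y hy => if_pos hy⟩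
  · simp only [hxM]
    exact ⟨⟨hx, hxM⟩, sdiff_subset, fun y hy => if_neg hy.2⟩

theorem of_mem_of_notMem (ha : a ∈ M) (hc : c ∉ M) : concatOrd F M o₁ o₂ a c := by
  refine Or.inl ?_
  simp only [ha, hc, if_true, if_false]
  exact frontOrd_first _ (sdiff_ne_of_nonempty ⟨a, ha⟩)

theorem not_of_notMem_of_mem (ha : a ∉ M) (hc : c ∈ M) : ¬concatOrd F M o₁ o₂ a c := by
  have hne : F \ M ≠ M := sdiff_ne_of_nonempty ⟨c, hc⟩
  rintro (h | ⟨h, -⟩) <;> simp only [ha, hc, if_true, if_false] at h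
  · rcases h with h | ⟨h, -⟩ <;> simp [hne] at h
  · exact hne h

theorem iff_left (ha : a ∈ M) (hc : c ∈ M) : concatOrd F M o₁ o₂ a c ↔ o₁ a c := by
  simp [concatOrd, labelLex, frontOrd_irrefl, ha, hc]

theorem iff_right (hM : M.Nonempty) (ha : a ∉ M) (hc : c ∉ M) :
    concatOrd F M o₁ o₂ a c ↔ o₂ a c := by
  simp [concatOrd, labelLex, frontOrd_irrefl, ha, hc, sdiff_ne_of_nonempty hM]

variable (hMF : M ⊆ F) (hM : M.Nonempty)
include hMF hM

theorem isLinOn (h₁ : IsLinOn M o₁) (h₂ : IsLinOn (F \ M) o₂) :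
    IsLinOn F (concatOrd F M o₁ o₂) := by
  refine (isBlockMap hMF).isLinOn_labelLex (isLinOn_frontOrd _ _) fun x _ => ?_
  by_cases hxM : x ∈ M
  · simpa [hxM] using h₁
  · simpa [hxM, sdiff_ne_of_nonempty hM] using h₂

theorem isInterval_left (hY : Y ⊆ M) (h : IsInterval M o₁ Y) :
    IsInterval F (concatOrd F M o₁ o₂) Y := by
  obtain ⟨m, hm⟩ := hM
  exact (isBlockMap hMF).isInterval_labelLex (isLinOn_frontOrd _ _) (hMF hm)
    (by simpa [hm] using hY) (by simpa [hm] using h)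

theorem isInterval_right (hE : (F \ M).Nonempty) (hY : Y ⊆ F \ M) (h : IsInterval (F \ M) o₂ Y) :
    IsInterval F (concatOrd F M o₁ o₂) Y := by
  obtain ⟨e, he⟩ := hE
  exact (isBlockMap hMF).isInterval_labelLex (isLinOn_frontOrd _ _) he.1 (by simpa [he.2] using hY)
    (by simpa [he.2, sdiff_ne_of_nonempty hM] using h)

omit hM in
theorem isInterval_of_left (hm : m ∈ M) (hY : Y ⊆ M) (h : IsInterval F (concatOrd F M o₁ o₂) Y) :
    IsInterval M o₁ Y := by
  simpa [hm] using (isBlockMap hMF).isInterval_of_labelLex (hMF hm) (by simpa [hm] using hY) h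

theorem isInterval_of_right (he : e ∈ F \ M) (hY : Y ⊆ F \ M)
    (h : IsInterval F (concatOrd F M o₁ o₂) Y) : IsInterval (F \ M) o₂ Y := by
  simpa [he.2, sdiff_ne_of_nonempty hM] using
    (isBlockMap hMF).isInterval_of_labelLex he.1 (by simpa [he.2] using hY) h

end concatOrd

/-! ### Realizing a family by its compatible orders -/

def IsCompatible (F : Set α) (𝓕 : Set (Set α)) (r : α → α → Prop) : Prop :=
  IsLinOn F r ∧ ∀ Y ∈ 𝓕, IsInterval F r Y

theorem IsCompatible.swap {F : Set α} {𝓕 : Set (Set α)} {r : α → α → Prop}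
    (h : IsCompatible F 𝓕 r) : IsCompatible F 𝓕 (Function.swap r) :=
  ⟨h.1.swap, fun Y hY => (h.2 Y hY).swap⟩

def RealizedByOrders (F : Set α) (𝓕 : Set (Set α)) : Prop :=
  (∃ r, IsCompatible F 𝓕 r) ∧
    ∀ X ⊆ F, X.Nonempty → (∀ r, IsCompatible F 𝓕 r → IsInterval F r X) → X ∈ 𝓕

theorem realizedByOrders_of_subsingleton {F : Set α} {𝓕 : Set (Set α)} (hF𝓕 : F ∈ 𝓕)
    (hsub : ∀ Y ∈ 𝓕, Y ⊆ F) (hs : F.Subsingleton) : RealizedByOrders F 𝓕 := by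
  refine ⟨⟨WellOrderingRel, IsLinOn.of_isStrictTotalOrder, fun Y hY a ha _ _ c hc _ _ => ?_⟩,
    fun X hXF hXne _ => ?_⟩
  · rwa [← hs (hsub Y hY ha) hc]
  · obtain ⟨x, hx⟩ := hXne
    rwa [subset_antisymm hXF fun y hy => by rwa [← hs (hXF hx) hy]]

namespace IsBlockMap

variable {F : Set α} {𝓕 : Set (Set α)} {blk : α → Set α} (hblk : IsBlockMap F blk)
include hblk

theorem isCompatible_labelLex (hax : SatisfiesAxioms F 𝓕)
    (hsub : ∀ Y ∈ 𝓕 \ {F}, ∀ y ∈ Y, Y ⊆ blk y) {L : Set α → Set α → Prop}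
    {o : Set α → α → α → Prop} (hL : IsLinOn (blk '' F) L)
    (ho : ∀ x ∈ F, IsCompatible (blk x) (𝓕 ∩ 𝒫 blk x) (o (blk x))) :
    IsCompatible F 𝓕 (labelLex blk L o) := by
  refine ⟨hblk.isLinOn_labelLex hL fun x hx => (ho x hx).1, fun Y hY => ?_⟩
  by_cases hYF : Y = F
  · exact hYF ▸ fun _ _ _ _ c hc _ _ => hc
  obtain ⟨y, hy⟩ := hax.nonempty_of_mem hY
  have hyF : y ∈ F := hax.subset_of_mem hY hy
  have hYy := hsub Y ⟨hY, hYF⟩ y hy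
  exact hblk.isInterval_labelLex hL hyF hYy ((ho y hyF).2 Y ⟨hY, hYy⟩)

theorem exists_labelLex_between {X : Set α} (hXF : X ⊆ F) (hXF' : X ≠ F) (hXne : X.Nonempty)
    (hX : ∀ x ∈ X, ¬X ⊆ blk x) {o : Set α → α → α → Prop}
    (ho : ∀ x ∈ F, IsLinOn (blk x) (o (blk x))) :
    ∃ L, IsLinOn (blk '' F) L ∧
      ∃ a ∈ X, ∃ b ∈ X, ∃ c ∈ F \ X, labelLex blk L o a c ∧ labelLex blk L o c b := by
  classical
  have hmem : ∀ {u}, u ∈ F → u ∈ blk u := fun hu => (hblk _ hu).1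
  by_cases hA : ∃ u ∈ X, ∃ v ∈ blk u, v ∉ X
  · obtain ⟨u, hu, v, hv, hvX⟩ := hA
    obtain ⟨w, hw, hwu⟩ := not_subset.1 (hX u hu)
    have huF := hXF hu
    have hvu : blk v = blk u := (hblk u huF).2.2 v hv
    have hwu' : blk w ≠ blk u := fun h => hwu (h ▸ hmem (hXF hw))
    have hv' : v ∈ F \ X := ⟨(hblk u huF).2.1 hv, hvX⟩
    rcases (ho u huF).2.2 u (hmem huF) v hv (fun h => hvX (h ▸ hu)) with h | h
    · exact ⟨frontOrd (blk u) (blk u), isLinOn_frontOrd _ _, u, hu, w, hw, v, hv',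
        Or.inr ⟨hvu.symm, h⟩, Or.inl (by rw [hvu]; exact frontOrd_first _ hwu')⟩
    · exact ⟨frontOrd (blk w) (blk w), isLinOn_frontOrd _ _, w, hw, u, hu, v, hv',
        Or.inl (by rw [hvu]; exact frontOrd_first _ hwu'.symm), Or.inr ⟨hvu, hvu ▸ h⟩⟩
  · push Not at hA
    obtain ⟨x, hx⟩ := hXne
    obtain ⟨z, hz, hzx⟩ := not_subset.1 (hX x hx)
    obtain ⟨y, hyF, hyX⟩ := sdiff_nonempty.2 fun h => hXF' (subset_antisymm hXF h)
    have hyx : blk y ≠ blk x := fun h => hyX (hA x hx y (h ▸ hmem hyF))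
    have hyz : blk y ≠ blk z := fun h => hyX (hA z hz y (h ▸ hmem hyF))
    have hzx' : blk z ≠ blk x := fun h => hzx (h ▸ hmem (hXF hz))
    exact ⟨frontOrd (blk x) (blk y), isLinOn_frontOrd _ _, x, hx, z, hz, y, ⟨hyF, hyX⟩,
      Or.inl (frontOrd_first _ hyx), Or.inl (frontOrd_second hyx hzx' hyz.symm)⟩

theorem realizedByOrders (hax : SatisfiesAxioms F 𝓕) (hsub : ∀ Y ∈ 𝓕 \ {F}, ∀ y ∈ Y, Y ⊆ blk y)
    (ih : ∀ x ∈ F, RealizedByOrders (blk x) (𝓕 ∩ 𝒫 blk x)) : RealizedByOrders F 𝓕 := by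
  classical
  have hB : ∀ B ∈ blk '' F, ∃ r, IsCompatible B (𝓕 ∩ 𝒫 B) r := by
    rintro _ ⟨x, hx, rfl⟩
    exact (ih x hx).1
  choose! o ho using hB
  have ho' : ∀ x ∈ F, IsCompatible (blk x) (𝓕 ∩ 𝒫 blk x) (o (blk x)) :=
    fun x hx => ho _ (mem_image_of_mem blk hx)
  have hlin : IsLinOn (blk '' F) WellOrderingRel := IsLinOn.of_isStrictTotalOrder
  refine ⟨⟨_, hblk.isCompatible_labelLex hax hsub hlin ho'⟩, fun X hXF hXne hX => ?_⟩
  by_cases hXF' : X = F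
  · exact hXF' ▸ hax.self_mem
  by_cases hin : ∃ x ∈ X, X ⊆ blk x
  · obtain ⟨x, hxX, hXx⟩ := hin
    have hx := hXF hxX
    refine ((ih x hx).2 X hXx hXne fun o' ho'' => ?_).1
    have hupd : ∀ y ∈ F, IsCompatible (blk y) (𝓕 ∩ 𝒫 blk y)
        (Function.update o (blk x) o' (blk y)) := by
      intro y hy
      by_cases h : blk y = blk x
      · rw [h, Function.update_self]; exact ho''
      · rw [Function.update_of_ne h]; exact ho' y hy
    simpa using hblk.isInterval_of_labelLex hx hXx
      (hX _ (hblk.isCompatible_labelLex hax hsub hlin hupd))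
  · push Not at hin
    obtain ⟨L, hL, a, ha, b, hb, c, hc, hac, hcb⟩ :=
      hblk.exists_labelLex_between hXF hXF' hXne hin fun x hx => (ho' x hx).1
    exact absurd (hX _ (hblk.isCompatible_labelLex hax hsub hL ho') a ha b hb c hc.1 hac hcb) hc.2

end IsBlockMap

theorem SatisfiesAxioms.realizedByOrders_of_maximal_disjoint {F : Set α} {𝓕 : Set (Set α)}
    (hax : SatisfiesAxioms F 𝓕) (hF : F.Finite) (hnt : F.Nontrivial)
    (hdisj : ∀ M N, Maximal (· ∈ 𝓕 \ {F}) M → Maximal (· ∈ 𝓕 \ {F}) N →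
      (M ∩ N).Nonempty → M = N)
    (ih : ∀ Y ∈ 𝓕 \ {F}, RealizedByOrders Y (𝓕 ∩ 𝒫 Y)) : RealizedByOrders F 𝓕 := by
  have hsing : ∀ x ∈ F, {x} ∈ 𝓕 \ {F} :=
    fun x hx => ⟨hax.singleton_mem hx, fun h => hnt.ne_singleton (h : {x} = F).symm⟩
  choose! blk hxblk hblk using fun x hx => hax.exists_maximal_superset hF (hsing x hx)
  have hxblk' : ∀ x ∈ F, x ∈ blk x := fun x hx => hxblk x hx rfl
  have hsub : ∀ Y ∈ 𝓕 \ {F}, ∀ y ∈ Y, Y ⊆ blk y := fun Y hY y hy => by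
    obtain ⟨N, hYN, hN⟩ := hax.exists_maximal_superset hF hY
    have hyF := hax.subset_of_mem hY.1 hy
    rwa [hdisj N (blk y) hN (hblk y hyF) ⟨y, hYN hy, hxblk' y hyF⟩] at hYN
  have hmap : IsBlockMap F blk := fun x hx => ⟨hxblk' x hx, hax.subset_of_mem (hblk x hx).prop.1,
    fun y hy => have hyF := hax.subset_of_mem (hblk x hx).prop.1 hy
      hdisj _ _ (hblk y hyF) (hblk x hx) ⟨y, hxblk' y hyF, hy⟩⟩
  exact hmap.realizedByOrders hax hsub fun x hx => ih _ (hblk x hx).prop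

theorem concatOrd.sdiff_subset_of_forall_isInterval {F M X : Set α} {𝓖 : Set (Set α)}
    {o₁ : α → α → Prop} (hM : M.Nonempty) (hE : ∃ o, IsCompatible (F \ M) 𝓖 o) (hXF : X ⊆ F)
    (hXM : ¬X ⊆ M) (hXE : ¬X ⊆ F \ M)
    (hX : ∀ o₂, IsCompatible (F \ M) 𝓖 o₂ → IsInterval F (concatOrd F M o₁ o₂) X) :
    F \ M ⊆ X := by
  obtain ⟨x, hx, hxM⟩ := not_subset.1 hXM
  obtain ⟨w, hw, hwM⟩ : ∃ w ∈ X, w ∈ M := by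
    obtain ⟨w, hw, hwE⟩ := not_subset.1 hXE
    exact ⟨w, hw, not_not.1 fun h => hwE ⟨hXF hw, h⟩⟩
  intro y hy
  by_contra hyX
  -- `y` would lie between `w` and `x` in an order putting `y` before `x` on `F \ M`
  have key : ∀ o, IsCompatible (F \ M) 𝓖 o → ¬o y x := fun o ho h =>
    hyX (hX o ho w hw x hx y hy.1 (concatOrd.of_mem_of_notMem hwM hy.2)
      ((concatOrd.iff_right hM hy.2 hxM).2 h))
  obtain ⟨o, ho⟩ := hE
  rcases ho.1.2.2 x ⟨hXF hx, hxM⟩ y hy fun h => hyX (h ▸ hx) with h | h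
  · exact key _ ho.swap h
  · exact key o ho h

namespace SatisfiesAxioms

variable {F X Y : Set α} {𝓕 : Set (Set α)} {M M' : Set α} {o₁ o₂ : α → α → Prop}
  (hax : SatisfiesAxioms F 𝓕) (hM : Maximal (· ∈ 𝓕 \ {F}) M)
  (hM' : Maximal (· ∈ 𝓕 \ {F}) M') (hne : M ≠ M') (hMM' : (M ∩ M').Nonempty)
include hax hM hM' hne hMM'

theorem sdiff_eq_of_maximal : F \ M = M' \ M := by
  rw [← hax.union_eq_of_maximal hM hM' hne hMM', union_sdiff_left]

theorem precedes_or_precedes_swap {o : α → α → Prop} (ho : IsCompatible M (𝓕 ∩ 𝒫 M) o) :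
    Precedes o (M \ M') (M ∩ M') ∨ Precedes (Function.swap o) (M \ M') (M ∩ M') :=
  have hA := hax.sdiff_mem hM.prop.1 hM'.prop.1 (bowtie_of_maximal hM hM' hne hMM')
  have hC := hax.inter_mem hM.prop.1 hM'.prop.1 hMM'
  (ho.2 _ ⟨hA, sdiff_subset⟩).precedes_or_precedes_swap ho.1 (ho.2 _ ⟨hC, inter_subset_left⟩)
    sdiff_subset inter_subset_left disjoint_sdiff_inter

theorem exists_precedes (h : ∃ o, IsCompatible M (𝓕 ∩ 𝒫 M) o) :
    ∃ o, IsCompatible M (𝓕 ∩ 𝒫 M) o ∧ Precedes o (M \ M') (M ∩ M') := by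
  obtain ⟨o, ho⟩ := h
  exact (hax.precedes_or_precedes_swap hM hM' hne hMM' ho).elim (fun h => ⟨o, ho, h⟩)
    fun h => ⟨_, ho.swap, h⟩

theorem forall_isInterval_of_precedes
    (h : ∀ o, IsCompatible M (𝓕 ∩ 𝒫 M) o → Precedes o (M \ M') (M ∩ M') → IsInterval M o Y) :
    ∀ o, IsCompatible M (𝓕 ∩ 𝒫 M) o → IsInterval M o Y := fun o ho =>
  (hax.precedes_or_precedes_swap hM hM' hne hMM' ho).elim (h o ho) fun hor => (h _ ho.swap hor).swap

theorem mem_of_sdiff_subset (ihM : RealizedByOrders M (𝓕 ∩ 𝒫 M))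
    (hXF : X ⊆ F) (hEX : F \ M ⊆ X) (hXM : (X ∩ M).Nonempty)
    (hX : ∀ o₁, IsCompatible M (𝓕 ∩ 𝒫 M) o₁ → Precedes o₁ (M \ M') (M ∩ M') →
      IsInterval F (concatOrd F M o₁ o₂) X) : X ∈ 𝓕 := by
  have hMF : M ⊆ F := hax.subset_of_mem hM.prop.1
  have hM'F : M' ⊆ F := hax.subset_of_mem hM'.prop.1
  have hE := hax.sdiff_eq_of_maximal hM hM' hne hMM'
  obtain ⟨-, ⟨a₀, ha₀⟩, ⟨e, he⟩⟩ := bowtie_of_maximal hM hM' hne hMM'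
  have he' : e ∈ F \ M := hE ▸ he
  have hfinal : ∀ o₁, IsCompatible M (𝓕 ∩ 𝒫 M) o₁ → Precedes o₁ (M \ M') (M ∩ M') →
      ∀ a ∈ X ∩ M, ∀ c ∈ M, o₁ a c → c ∈ X ∩ M := fun o₁ ho₁ hor a ha c hc hac =>
    ⟨hX o₁ ho₁ hor a ha.1 e (hEX he') c (hMF hc) ((concatOrd.iff_left ha.2 hc).2 hac)
      (concatOrd.of_mem_of_notMem hc he'.2), hc⟩
  obtain ⟨o₁, ho₁, hor₁⟩ := hax.exists_precedes hM hM' hne hMM' ihM.1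
  by_cases hCX : M ∩ M' ⊆ X ∩ M
  · have hW : X ∩ M ∈ 𝓕 := (ihM.2 _ inter_subset_right hXM
      (hax.forall_isInterval_of_precedes hM hM' hne hMM' fun o ho hor a ha _ _ c hc hac _ =>
        hfinal o ho hor a ha c hc hac)).1
    have hX_eq : X = X ∩ M ∪ M' := by
      ext x
      by_cases hxM : x ∈ M
      · exact ⟨fun hx => Or.inl ⟨hx, hxM⟩, fun hx => hx.elim (·.1) fun h => (hCX ⟨hxM, h⟩).1⟩
      · exact ⟨fun hx => Or.inr (hE ▸ ⟨hXF hx, hxM⟩ : x ∈ M' \ M).1,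
          fun hx => hx.elim (·.1) fun h => hEX ⟨hM'F h, hxM⟩⟩
    rw [hX_eq]
    obtain ⟨c, hc⟩ := hMM'
    exact hax.union_mem hW hM'.prop.1 ⟨c, hCX hc, hc.2⟩
  · obtain ⟨c, hcC, hcX⟩ := not_subset.1 hCX
    have hAX : M \ M' ⊆ M \ X := fun a ha => ⟨ha.1, fun haX =>
      hcX (hfinal o₁ ho₁ hor₁ a ⟨haX, ha.1⟩ c hcC.1 (hor₁ a ha c hcC))⟩
    have hMX : M \ X ∈ 𝓕 := (ihM.2 _ sdiff_subset ⟨a₀, hAX ha₀⟩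
      (hax.forall_isInterval_of_precedes hM hM' hne hMM' fun o ho hor a ha b hb c hc hac hcb =>
        ⟨hc, fun hcX => hb.2 (hfinal o ho hor c ⟨hcX, hc⟩ b hb.1 hcb).1⟩)).1
    have hbow : Bowtie (M \ X) M' :=
      ⟨⟨c, ⟨hcC.1, fun h => hcX ⟨h, hcC.1⟩⟩, hcC.2⟩, ⟨a₀, hAX ha₀, ha₀.2⟩,
        ⟨e, he.1, fun h => he.2 h.1⟩⟩
    have hX_eq : X = M' \ (M \ X) := by
      ext x
      by_cases hxM : x ∈ M
      · exact ⟨fun hx => ⟨not_not.1 fun h => (hAX ⟨hxM, h⟩).2 hx, fun h => h.2 hx⟩,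
          fun hx => not_not.1 fun h => hx.2 ⟨hxM, h⟩⟩
      · exact ⟨fun hx => ⟨(hE ▸ ⟨hXF hx, hxM⟩ : x ∈ M' \ M).1, fun h => hxM h.1⟩,
          fun hx => hEX ⟨hM'F hx.1, hxM⟩⟩
    rw [hX_eq]
    exact hax.sdiff_mem hM'.prop.1 hMX hbow.symm

variable (hF : F.Finite)
include hF

theorem sdiff_subset_of_straddle (hY : Y ∈ 𝓕 \ {F}) (hYM : ¬Y ⊆ M) (hYE : ¬Y ⊆ F \ M) :
    F \ M ⊆ Y ∧ M \ Y ∈ 𝓕 ∧ M \ M' ⊆ M \ Y := by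
  have hYF := hax.subset_of_mem hY.1
  have hYM' : Y ⊆ M' := (hax.subset_or_subset_of_maximal hF hM hM' hne hMM' hY).resolve_left hYM
  have hmeet : (Y ∩ M).Nonempty := by
    obtain ⟨y, hy, hyE⟩ := not_subset.1 hYE
    exact ⟨y, hy, not_not.1 fun h => hyE ⟨hYF hy, h⟩⟩
  have hU : Y ∪ M = F := by
    by_contra h
    have hMU := hM.eq_of_subset ⟨hax.union_mem hY.1 hM.prop.1 hmeet, h⟩ subset_union_right
    exact hYM (hMU ▸ subset_union_left)
  have hEY : F \ M ⊆ Y := fun x hx => (hU ▸ hx.1 : x ∈ Y ∪ M).resolve_right hx.2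
  have hbow : Bowtie Y M := ⟨hmeet, sdiff_nonempty.2 hYM, sdiff_nonempty.2 fun hMY =>
    hY.2 (subset_antisymm hYF fun x hx => (hU ▸ hx : x ∈ Y ∪ M).elim id fun h => hMY h)⟩
  exact ⟨hEY, hax.sdiff_mem hM.prop.1 hY.1 hbow.symm,
    fun x hx => ⟨hx.1, fun hxY => hx.2 (hYM' hxY)⟩⟩

theorem isCompatible_concatOrd (ho₁ : IsCompatible M (𝓕 ∩ 𝒫 M) o₁)
    (hor : Precedes o₁ (M \ M') (M ∩ M')) (ho₂ : IsCompatible (F \ M) (𝓕 ∩ 𝒫 (F \ M)) o₂) :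
    IsCompatible F 𝓕 (concatOrd F M o₁ o₂) := by
  have hMF : M ⊆ F := hax.subset_of_mem hM.prop.1
  have hMne : M.Nonempty := hMM'.mono inter_subset_left
  refine ⟨concatOrd.isLinOn hMF hMne ho₁.1 ho₂.1, fun Y hY => ?_⟩
  by_cases hYF : Y = F
  · exact hYF ▸ fun _ _ _ _ c hc _ _ => hc
  by_cases hYM : Y ⊆ M
  · exact concatOrd.isInterval_left hMF hMne hYM (ho₁.2 Y ⟨hY, hYM⟩)
  by_cases hYE : Y ⊆ F \ M
  · exact concatOrd.isInterval_right hMF hMne ((hax.nonempty_of_mem hY).mono hYE) hYE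
      (ho₂.2 Y ⟨hY, hYE⟩)
  obtain ⟨hEY, hMY, hAY⟩ := hax.sdiff_subset_of_straddle hM hM' hne hMM' hF ⟨hY, hYF⟩ hYM hYE
  obtain ⟨a₀, ha₀⟩ := (bowtie_of_maximal hM hM' hne hMM').2.1
  -- `Y ∩ M` is a final segment of `o₁`, since the member `M \ Y` contains `M \ M'`
  have hfinal : ∀ a ∈ Y ∩ M, ∀ c ∈ M, o₁ a c → c ∈ Y := by
    intro a ha c hc hac
    by_contra hcY
    have haM' : a ∈ M' := not_not.1 fun h => (hAY ⟨ha.2, h⟩).2 ha.1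
    exact (ho₁.2 _ ⟨hMY, sdiff_subset⟩ a₀ (hAY ha₀) c ⟨hc, hcY⟩ a ha.2
      (hor a₀ ha₀ a ⟨ha.2, haM'⟩) hac).2 ha.1
  intro a ha b _ c hc hac _
  by_cases hcM : c ∈ M
  · by_cases haM : a ∈ M
    · exact hfinal a ⟨ha, haM⟩ c hcM ((concatOrd.iff_left haM hcM).1 hac)
    · exact absurd hac (concatOrd.not_of_notMem_of_mem haM hcM)
  · exact hEY ⟨hc, hcM⟩

theorem realizedByOrders_of_two_maximal (ihM : RealizedByOrders M (𝓕 ∩ 𝒫 M))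
    (ihE : RealizedByOrders (F \ M) (𝓕 ∩ 𝒫 (F \ M))) : RealizedByOrders F 𝓕 := by
  have hMF : M ⊆ F := hax.subset_of_mem hM.prop.1
  have hMne : M.Nonempty := hMM'.mono inter_subset_left
  have hcompat : ∀ {o₁ o₂}, IsCompatible M (𝓕 ∩ 𝒫 M) o₁ → Precedes o₁ (M \ M') (M ∩ M') →
      IsCompatible (F \ M) (𝓕 ∩ 𝒫 (F \ M)) o₂ → IsCompatible F 𝓕 (concatOrd F M o₁ o₂) :=
    hax.isCompatible_concatOrd hM hM' hne hMM' hF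
  obtain ⟨o₁, ho₁, hor₁⟩ := hax.exists_precedes hM hM' hne hMM' ihM.1
  obtain ⟨o₂, ho₂⟩ := ihE.1
  refine ⟨⟨_, hcompat ho₁ hor₁ ho₂⟩, fun X hXF hXne hX => ?_⟩
  by_cases hXF' : X = F
  · exact hXF' ▸ hax.self_mem
  obtain ⟨x, hx⟩ := hXne
  by_cases hXM : X ⊆ M
  · exact (ihM.2 X hXM ⟨x, hx⟩ (hax.forall_isInterval_of_precedes hM hM' hne hMM' fun o ho hor =>
      concatOrd.isInterval_of_left hMF (hXM hx) hXM (hX _ (hcompat ho hor ho₂)))).1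
  by_cases hXE : X ⊆ F \ M
  · exact (ihE.2 X hXE ⟨x, hx⟩ fun o ho =>
      concatOrd.isInterval_of_right hMF hMne (hXE hx) hXE (hX _ (hcompat ho₁ hor₁ ho))).1
  have hEX := concatOrd.sdiff_subset_of_forall_isInterval hMne ihE.1 hXF hXM hXE
    fun o ho => hX _ (hcompat ho₁ hor₁ ho)
  obtain ⟨w, hw, hwE⟩ := not_subset.1 hXE
  exact hax.mem_of_sdiff_subset hM hM' hne hMM' ihM hXF hEX
    ⟨w, hw, not_not.1 fun h => hwE ⟨hXF hw, h⟩⟩ fun o ho hor => hX _ (hcompat ho hor ho₂)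

end SatisfiesAxioms

theorem SatisfiesAxioms.realizedByOrders_of_proper {F : Set α} {𝓕 : Set (Set α)}
    (hax : SatisfiesAxioms F 𝓕) (hF : F.Finite)
    (ih : ∀ Y ∈ 𝓕 \ {F}, RealizedByOrders Y (𝓕 ∩ 𝒫 Y)) : RealizedByOrders F 𝓕 := by
  rcases F.subsingleton_or_nontrivial with hs | hnt
  · exact realizedByOrders_of_subsingleton hax.self_mem (fun _ => hax.subset_of_mem) hs
  by_cases hQ : ∃ M M', Maximal (· ∈ 𝓕 \ {F}) M ∧ Maximal (· ∈ 𝓕 \ {F}) M' ∧ M ≠ M' ∧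
      (M ∩ M').Nonempty
  · obtain ⟨M, M', hM, hM', hne, hMM'⟩ := hQ
    obtain ⟨m, hm, -⟩ := id hMM'
    have hE : F \ M ∈ 𝓕 \ {F} := ⟨hax.sdiff_eq_of_maximal hM hM' hne hMM' ▸
      hax.sdiff_mem hM'.prop.1 hM.prop.1 (bowtie_of_maximal hM hM' hne hMM').symm,
      fun h => ((Set.ext_iff.1 h m).2 (hax.subset_of_mem hM.prop.1 hm)).2 hm⟩
    exact hax.realizedByOrders_of_two_maximal hM hM' hne hMM' hF (ih M hM.prop) (ih _ hE)
  · exact hax.realizedByOrders_of_maximal_disjoint hF hnt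
      (fun M N hM hN hMN => by_contra fun hne => hQ ⟨M, N, hM, hN, hne, hMN⟩) ih

theorem SatisfiesAxioms.realizedByOrders {F : Set α} {𝓕 : Set (Set α)}
    (hax : SatisfiesAxioms F 𝓕) (hF : F.Finite) : RealizedByOrders F 𝓕 := by
  induction h : F.ncard using Nat.strong_induction_on generalizing F 𝓕 with
  | _ n ih =>
    refine hax.realizedByOrders_of_proper hF fun Y hY =>
      ih _ ?_ (hax.inter_powerset hY.1) (hF.subset (hax.subset_of_mem hY.1)) rfl
    exact h ▸ ncard_lt_ncard (ssubset_of_subset_of_ne (hax.subset_of_mem hY.1) hY.2) hF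

theorem RealizedByOrders.isCloneStructure {F : Set α} {𝓕 : Set (Set α)}
    (h : RealizedByOrders F 𝓕) (hF : F.Finite) (hsub : ∀ X ∈ 𝓕, X ⊆ F)
    (hne : ∀ X ∈ 𝓕, X.Nonempty) : IsCloneStructure F 𝓕 := by
  let N := {X | X ⊆ F ∧ X.Nonempty ∧ X ∉ 𝓕}
  have : Finite N := (hF.finite_subsets.subset fun X (hX : X ∈ N) => hX.1).to_subtype
  have hsep : ∀ X ∈ N, ∃ r, IsCompatible F 𝓕 r ∧ ¬IsInterval F r X := fun X hX => by
    by_contra! h'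
    exact hX.2.2 (h.2 X hX.1 hX.2.1 h')
  choose! ρ hρ using hsep
  obtain ⟨r₀, hr₀⟩ := h.1
  -- one order for each set to be excluded, and `r₀` so that there is at least one order
  let e := Finite.equivFin (Option N)
  let R : Fin (Nat.card (Option N)) → α → α → Prop := fun i => (e.symm i).elim r₀ fun X => ρ X
  have hR : ∀ i, IsCompatible F 𝓕 (R i) := fun i => by
    simp only [R]
    rcases e.symm i with _ | X
    exacts [hr₀, (hρ X X.2).1]
  have hRp : IsProfile F R := ⟨Nat.card_pos, fun i => (hR i).1⟩
  refine ⟨_, R, hRp, Set.ext fun X => ?_⟩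
  rw [mem_cloneSets_iff hRp]
  refine ⟨fun hX => ⟨hne X hX, hsub X hX, fun i => (hR i).2 X hX⟩, fun ⟨hXne, hXF, hX⟩ => ?_⟩
  by_contra hX𝓕
  have hXi := hX (e (some ⟨X, hXF, hXne, hX𝓕⟩))
  simp only [R, Equiv.symm_apply_apply, Option.elim_some] at hXi
  exact (hρ X ⟨hXF, hXne, hX𝓕⟩).2 hXi

theorem clone_structure_iff_axioms (F : Set α) (hF : F.Finite) (hne : F.Nonempty)
    (𝓕 : Set (Set α)) :
    IsCloneStructure F 𝓕 ↔ SatisfiesAxioms F 𝓕 := by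
  constructor
  · rintro ⟨n, R, hR, rfl⟩
    exact satisfiesAxioms_cloneSets hR hF hne
  · intro hax
    exact (hax.realizedByOrders hF).isCloneStructure hF (fun _ => hax.subset_of_mem)
      fun _ => hax.nonempty_of_mem
end

section
/- Let ℱ be an irreducible family of subsets of a finite set F satisfying axioms A1–A5, and let D ∈ ℱ be a minimal proper subset of ℱ, i.e., D is a proper subset of F and no proper subset D' ∈ ℱ of F satisfies D' ⊊ D. Then |D| = 2. -/
variable {α : Type*}

/-- `Y` is a proper subset of `Z`: `Y ⊆ Z` and `1 < |Y| < |Z|`. -/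
def IsProperSubsetOf (Y Z : Set α) : Prop :=
  Y ⊆ Z ∧ 1 < Y.ncard ∧ Y.ncard < Z.ncard

/-- `𝓔` is a subfamily of `𝓕` with support `E`. -/
def IsSubfamilyWithSupport (𝓕 𝓔 : Set (Set α)) (E : Set α) : Prop :=
  E ∈ 𝓕 ∧ 𝓔 = {X ∈ 𝓕 | X ⊆ E} ∧ ∀ X ∈ 𝓕, X ∉ 𝓔 → E ⊆ X ∨ X ∩ E = ∅

/-- The family `𝓕` over ground set `F` has no proper subfamilies. -/
def IrreducibleFamily (F : Set α) (𝓕 : Set (Set α)) : Prop :=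
  ¬∃ (𝓔 : Set (Set α)) (E : Set α),
      IsSubfamilyWithSupport 𝓕 𝓔 E ∧ IsProperSubsetOf E F

/-! A member `X` of `𝓕` that intersects `D` non-trivially splits `D` into the two members `D ∩ X`
and `D \ X` of `𝓕` (axioms A2 and A3). If `D` is a minimal proper subset, both halves are
singletons, so `|D| = 2`. If no member of `𝓕` meets `D` non-trivially, `D` is the support of a
proper subfamily, which irreducibility forbids. -/

namespace SatisfiesAxioms

variable {F : Set α} {𝓕 : Set (Set α)}

theorem empty_notMem (hax : SatisfiesAxioms F 𝓕) : (∅ : Set α) ∉ 𝓕 :=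
  hax.2.1.2.1

theorem nonempty_of_mem_s10 (hax : SatisfiesAxioms F 𝓕) {X : Set α} (hX : X ∈ 𝓕) : X.Nonempty :=
  Set.nonempty_iff_ne_empty.mpr fun h => hax.empty_notMem (h ▸ hX)

theorem inter_mem_s10 (hax : SatisfiesAxioms F 𝓕) {C₁ C₂ : Set α} (h₁ : C₁ ∈ 𝓕) (h₂ : C₂ ∈ 𝓕)
    (h : (C₁ ∩ C₂).Nonempty) : C₁ ∩ C₂ ∈ 𝓕 :=
  (hax.2.2.1 C₁ h₁ C₂ h₂ h).2

theorem diff_mem (hax : SatisfiesAxioms F 𝓕) {C₁ C₂ : Set α} (h₁ : C₁ ∈ 𝓕) (h₂ : C₂ ∈ 𝓕)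
    (h : Bowtie C₁ C₂) : C₁ \ C₂ ∈ 𝓕 :=
  (hax.2.2.2.1 C₁ h₁ C₂ h₂ h).1

end SatisfiesAxioms

theorem isSubfamilyWithSupport_of_forall_not_bowtie {𝓕 : Set (Set α)} {D : Set α} (hD : D ∈ 𝓕)
    (h : ∀ X ∈ 𝓕, ¬Bowtie D X) : IsSubfamilyWithSupport 𝓕 {X ∈ 𝓕 | X ⊆ D} D := by
  refine ⟨hD, rfl, fun X hX hXD => ?_⟩
  have hX_not_sub : ¬X ⊆ D := fun hsub => hXD ⟨hX, hsub⟩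
  by_contra! hcon
  exact h X hX ⟨Set.inter_comm X D ▸ hcon.2, Set.sdiff_nonempty.mpr hcon.1,
    Set.sdiff_nonempty.mpr hX_not_sub⟩

theorem IrreducibleFamily.exists_bowtie {F : Set α} {𝓕 : Set (Set α)}
    (hirr : IrreducibleFamily F 𝓕) {D : Set α} (hD : D ∈ 𝓕) (hprop : IsProperSubsetOf D F) :
    ∃ X ∈ 𝓕, Bowtie D X := by
  by_contra! h
  exact hirr ⟨_, D, isSubfamilyWithSupport_of_forall_not_bowtie hD h, hprop⟩

theorem IsProperSubsetOf.finite {Y Z : Set α} (h : IsProperSubsetOf Y Z) : Y.Finite :=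
  Set.finite_of_ncard_pos (zero_lt_one.trans h.2.1)

theorem ncard_eq_one_of_ssubset_of_minimal {F : Set α} {𝓕 : Set (Set α)}
    (hax : SatisfiesAxioms F 𝓕) {D : Set α} (hprop : IsProperSubsetOf D F)
    (hmin : ∀ D' ∈ 𝓕, IsProperSubsetOf D' F → ¬D' ⊂ D) {Y : Set α} (hY : Y ∈ 𝓕)
    (hYD : Y ⊂ D) : Y.ncard = 1 := by
  have hY_pos : 0 < Y.ncard :=
    (Set.ncard_pos (hprop.finite.subset hYD.subset)).mpr (hax.nonempty_of_mem_s10 hY)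
  have hY_lt : Y.ncard < D.ncard := Set.ncard_lt_ncard hYD hprop.finite
  by_contra hne
  exact hmin Y hY ⟨hYD.subset.trans hprop.1, by omega, hY_lt.trans hprop.2.2⟩ hYD

theorem minimal_proper_subset_card_two_general (F : Set α)
    (𝓕 : Set (Set α)) (hax : SatisfiesAxioms F 𝓕)
    (hirr : IrreducibleFamily F 𝓕)
    (D : Set α) (hD : D ∈ 𝓕) (hprop : IsProperSubsetOf D F)
    (hmin : ∀ D' ∈ 𝓕, IsProperSubsetOf D' F → ¬D' ⊂ D) :
    D.ncard = 2 := by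
  obtain ⟨X, hX, hbow⟩ := hirr.exists_bowtie hD hprop
  have hsingleton {Y : Set α} (hY : Y ∈ 𝓕) (hYD : Y ⊂ D) : Y.ncard = 1 :=
    ncard_eq_one_of_ssubset_of_minimal hax hprop hmin hY hYD
  have hinter : (D ∩ X).ncard = 1 :=
    hsingleton (hax.inter_mem_s10 hD hX hbow.1)
      (Set.inter_ssubset_left_iff.mpr (Set.sdiff_nonempty.mp hbow.2.1))
  have hdiff : (D \ X).ncard = 1 :=
    hsingleton (hax.diff_mem hD hX hbow) (Set.sdiff_ssubset_left_iff.mpr hbow.1)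
  rw [← Set.ncard_inter_add_ncard_sdiff_eq_ncard D X hprop.finite, hinter, hdiff]

theorem minimal_proper_subset_card_two (F : Set α) (hF : F.Finite)
    (𝓕 : Set (Set α)) (hax : SatisfiesAxioms F 𝓕)
    (hirr : IrreducibleFamily F 𝓕)
    (D : Set α) (hD : D ∈ 𝓕) (hprop : IsProperSubsetOf D F)
    (hmin : ∀ D' ∈ 𝓕, IsProperSubsetOf D' F → ¬D' ⊂ D) :
    D.ncard = 2 :=
  minimal_proper_subset_card_two_general F 𝓕 hax hirr D hD hprop hmin
end
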